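/- Let S = {z ∈ ℂ^m : ‖|z| − b‖₂ ≤ ε} with b ∈ ℝ^m, b ≥ 0, ε ≥ 0, where |z| denotes componentwise modulus. Given s ∈ ℂ^m with all s_i ≠ 0 and ‖|s| − b‖₂ > ε, the point z* with z*_i = (θ|s_i| + (1−θ)b_i)·sgn(s_i), where θ = ε/‖|s| − b‖₂, lies in S and satisfies ‖z* − s‖₂ ≤ ‖z − s‖₂ for all z ∈ S; i.e., z* is a Euclidean projection of s onto S. -/

import Mathlib

open Finset Complex

/-!
Write `d = ‖|s| - b‖`. For every `z ∈ S` the reverse triangle inequality, first componentwise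
and then in `ℝ^m`, gives `‖z - s‖ ≥ ‖|z| - |s|‖ ≥ ‖|s| - b‖ - ‖|z| - b‖ ≥ d - ε`. The point `z*`
keeps the phases of `s` and moves each modulus along the segment from `|s_i|` to `b_i`, so
`|z*| - b = θ (|s| - b)` and `z* - s` has moduli `(1 - θ) ||s_i| - b_i|`: hence `‖|z*| - b‖ = θ d = ε`
and `‖z* - s‖ = (1 - θ) d = d - ε`.
-/

lemma sqrt_sum_sq_eq_norm {ι : Type*} [Fintype ι] (u : ι → ℝ) :
    √(∑ i, u i ^ 2) = ‖WithLp.toLp 2 u‖ := by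
  simp [EuclideanSpace.norm_eq, Real.norm_eq_abs, sq_abs]

lemma sqrt_sum_sq_sub_sqrt_sum_sq_le {ι : Type*} [Fintype ι] (u v : ι → ℝ) :
    √(∑ i, u i ^ 2) - √(∑ i, v i ^ 2) ≤ √(∑ i, (u i - v i) ^ 2) := by
  simp only [sqrt_sum_sq_eq_norm]
  exact norm_sub_norm_le _ _

lemma sqrt_sum_sq_mul {ι : Type*} [Fintype ι] (c : ℝ) (u : ι → ℝ) :
    √(∑ i, (c * u i) ^ 2) = |c| * √(∑ i, u i ^ 2) := by
  simp_rw [mul_pow, ← Finset.mul_sum, Real.sqrt_mul (sq_nonneg c), Real.sqrt_sq_eq_abs]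

lemma sqrt_sum_sq_norm_sub_norm_le {ι E : Type*} [Fintype ι] [SeminormedAddCommGroup E]
    (x y : ι → E) : √(∑ i, (‖x i‖ - ‖y i‖) ^ 2) ≤ √(∑ i, ‖y i - x i‖ ^ 2) := by
  refine Real.sqrt_le_sqrt (sum_le_sum fun i _ => sq_le_sq.mpr ?_)
  rw [abs_norm, norm_sub_rev]
  exact abs_norm_sub_norm_le _ _

lemma sqrt_sum_sq_norm_sub_sub_le {ι E : Type*} [Fintype ι] [SeminormedAddCommGroup E]
    (b : ι → ℝ) (s z : ι → E) :
    √(∑ i, (‖s i‖ - b i) ^ 2) - √(∑ i, (‖z i‖ - b i) ^ 2) ≤ √(∑ i, ‖z i - s i‖ ^ 2) := by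
  calc _ ≤ √(∑ i, ((‖s i‖ - b i) - (‖z i‖ - b i)) ^ 2) := sqrt_sum_sq_sub_sqrt_sum_sq_le _ _
    _ = √(∑ i, (‖s i‖ - ‖z i‖) ^ 2) := by simp_rw [sub_sub_sub_cancel_right]
    _ ≤ _ := sqrt_sum_sq_norm_sub_norm_le s z

lemma norm_ofReal_mul_div_norm {s : ℂ} (hs : s ≠ 0) (r : ℝ) :
    ‖(r : ℂ) * (s / ‖s‖)‖ = |r| := by
  rw [norm_mul, norm_div, norm_real, norm_real, norm_norm, div_self (norm_ne_zero_iff.mpr hs),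
    mul_one, Real.norm_eq_abs]

lemma norm_ofReal_mul_div_norm_sub {s : ℂ} (hs : s ≠ 0) (r : ℝ) :
    ‖(r : ℂ) * (s / ‖s‖) - s‖ = |r - ‖s‖| := by
  have hs' : (‖s‖ : ℂ) ≠ 0 := ofReal_ne_zero.mpr (norm_ne_zero_iff.mpr hs)
  rw [← norm_ofReal_mul_div_norm hs]
  congr 1
  field_simp
  push_cast
  ring

/-- Projection onto the nonconvex tube `S = {z : ‖|z| − b‖₂ ≤ ε}`: when `s` has no zero
components and lies outside `S`, the point `z*` with
`z*_i = (θ|s_i| + (1−θ)b_i)·sgn(s_i)`, `θ = ε/‖|s|−b‖₂`, belongs to `S` and is a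
Euclidean projection of `s` onto `S`. -/
theorem projection_onto_magnitude_tube {m : ℕ} (b : Fin m → ℝ) (hb : ∀ i, 0 ≤ b i)
    (eps : ℝ) (heps : 0 ≤ eps) (s : Fin m → ℂ) (hs : ∀ i, s i ≠ 0)
    (hfar : eps < Real.sqrt (∑ i, (‖s i‖ - b i) ^ 2))
    (theta : ℝ) (htheta : theta = eps / Real.sqrt (∑ i, (‖s i‖ - b i) ^ 2))
    (zstar : Fin m → ℂ)
    (hzstar : ∀ i, zstar i =
      (((theta * ‖s i‖ + (1 - theta) * b i : ℝ)) : ℂ) * (s i / ‖s i‖)) :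
    Real.sqrt (∑ i, (‖zstar i‖ - b i) ^ 2) ≤ eps ∧
    ∀ z : Fin m → ℂ, Real.sqrt (∑ i, (‖z i‖ - b i) ^ 2) ≤ eps →
      Real.sqrt (∑ i, ‖zstar i - s i‖ ^ 2) ≤
        Real.sqrt (∑ i, ‖z i - s i‖ ^ 2) := by
  set d := √(∑ i, (‖s i‖ - b i) ^ 2)
  have hd : 0 < d := heps.trans_lt hfar
  have hθd : theta * d = eps := by rw [htheta]; field_simp
  have hθ0 : 0 ≤ theta := htheta ▸ div_nonneg heps hd.le
  have hθ1 : 0 ≤ 1 - theta := sub_nonneg.2 (htheta ▸ (div_le_one hd).mpr hfar.le)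
  have hzstar_tube : ∀ i, ‖zstar i‖ - b i = theta * (‖s i‖ - b i) := fun i => by
    rw [hzstar, norm_ofReal_mul_div_norm (hs i),
      abs_of_nonneg (add_nonneg (mul_nonneg hθ0 (norm_nonneg _)) (mul_nonneg hθ1 (hb i)))]
    ring
  have hzstar_dist : ∀ i, ‖zstar i - s i‖ ^ 2 = ((1 - theta) * (‖s i‖ - b i)) ^ 2 := fun i => by
    rw [hzstar, norm_ofReal_mul_div_norm_sub (hs i), sq_abs]
    ring
  refine ⟨?_, fun z hz => ?_⟩
  · simp_rw [hzstar_tube, sqrt_sum_sq_mul, abs_of_nonneg hθ0]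
    exact hθd.le
  · calc √(∑ i, ‖zstar i - s i‖ ^ 2) = d - eps := by
          simp_rw [hzstar_dist, sqrt_sum_sq_mul, abs_of_nonneg hθ1]
          change (1 - theta) * d = d - eps
          linarith
      _ ≤ d - √(∑ i, (‖z i‖ - b i) ^ 2) := by linarith
      _ ≤ _ := sqrt_sum_sq_norm_sub_sub_le b s z
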